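/- arXiv:0711.0807 — 6 statements merged into one kernel-verified Lean document; each statement's English description precedes it below -/
import Mathlib

section
/- Let χ be a standard Gaussian random variable (law N(0,1) on ℝ). Then for all real numbers a and b, the variance of the bias-corrected cosine statistic satisfies the exact identity Var(e^{b²/2} cos(a + bχ)) = (e^{b²} − e^{−b²})/2 − (1 − e^{−b²}) cos²(a), and consequently Var(e^{b²/2} cos(a + bχ)) ≤ b² e^{b²}. -/
open MeasureTheory Real ProbabilityTheory
open scoped NNReal

/-! The characteristic function of `N(m, v)` gives `E cos (a + t X) = e^{-v t²/2} cos (a + t m)`,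
and `cos² = (1 + cos (2 ·)) / 2` turns the second moment into another such expectation. After
scaling by `e^{b²/2}`, the bound is `sinh x ≤ x e^x` at `x = b²`, i.e. `1 - e^{-2x} ≤ 2x`. -/

lemma integral_cos_add_mul_gaussianReal (m : ℝ) (v : ℝ≥0) (a t : ℝ) :
    ∫ x, cos (a + t * x) ∂gaussianReal m v = exp (-(v * t ^ 2) / 2) * cos (a + t * m) := by
  have hint : Integrable (fun x : ℝ ↦ Complex.exp ((a + t * x : ℝ) * Complex.I))
      (gaussianReal m v) :=
    (integrable_const (1 : ℝ)).mono (by fun_prop)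
      (.of_forall fun x ↦ (Complex.norm_exp_ofReal_mul_I _).trans_le (by simp))
  have hchar : ∫ x, Complex.exp ((a + t * x : ℝ) * Complex.I) ∂gaussianReal m v
      = Complex.exp ((-(v * t ^ 2) / 2 : ℝ) + (a + t * m : ℝ) * Complex.I) := by
    simp_rw [Complex.ofReal_add, add_mul, Complex.exp_add, integral_const_mul, Complex.ofReal_mul,
      ← charFun_apply_real, charFun_gaussianReal, ← Complex.exp_add]
    congr 1
    push_cast
    ring
  calc ∫ x, cos (a + t * x) ∂gaussianReal m v
      = ∫ x, (Complex.exp ((a + t * x : ℝ) * Complex.I)).re ∂gaussianReal m v := by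
        simp only [Complex.exp_ofReal_mul_I_re]
    _ = (∫ x, Complex.exp ((a + t * x : ℝ) * Complex.I) ∂gaussianReal m v).re := integral_re hint
    _ = exp (-(v * t ^ 2) / 2) * cos (a + t * m) := by
        rw [hchar, Complex.exp_add, ← Complex.ofReal_exp, Complex.re_ofReal_mul,
          Complex.exp_ofReal_mul_I_re]

lemma memLp_cos_add_mul {ν : Measure ℝ} [IsFiniteMeasure ν] (p : ENNReal) (a t : ℝ) :
    MemLp (fun x ↦ cos (a + t * x)) p ν :=
  .of_bound (by fun_prop) 1 (.of_forall fun _ ↦ by simpa using abs_cos_le_one _)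

lemma variance_cos_add_mul_gaussianReal (m : ℝ) (v : ℝ≥0) (a t : ℝ) :
    Var[fun x ↦ cos (a + t * x); gaussianReal m v]
      = (1 + exp (-(2 * v * t ^ 2)) * cos (2 * (a + t * m))) / 2
        - exp (-(v * t ^ 2)) * cos (a + t * m) ^ 2 := by
  have hsq : (fun x ↦ cos (a + t * x)) ^ 2 = fun x ↦ (1 + cos (2 * a + 2 * t * x)) / 2 := by
    ext x
    rw [Pi.pow_apply, cos_sq]
    ring_nf
  rw [variance_eq_sub (memLp_cos_add_mul 2 a t), hsq,
    integral_div, integral_add (integrable_const _) ((memLp_cos_add_mul 1 _ _).integrable le_rfl),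
    integral_cos_add_mul_gaussianReal, integral_cos_add_mul_gaussianReal]
  have hexp : exp (-(v * t ^ 2) / 2) ^ 2 = exp (-(v * t ^ 2)) := by
    rw [← exp_nat_mul]; ring_nf
  simp only [integral_const, probReal_univ, smul_eq_mul, one_mul, mul_pow, hexp]
  ring_nf

lemma sinh_le_mul_exp (x : ℝ) : sinh x ≤ x * exp x := by
  have h := add_one_le_exp (-(2 * x))
  have hx : exp x * exp (-(2 * x)) = exp (-x) := by rw [← exp_add]; ring_nf
  rw [sinh_eq]
  nlinarith [exp_pos x]

theorem gaussian_bias_corrected_cosine_variance_general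
    {Ω : Type*} [MeasurableSpace Ω] (μ : Measure Ω) [IsProbabilityMeasure μ]
    (χ : Ω → ℝ) (hlaw : Measure.map χ μ = gaussianReal 0 1)
    (a b : ℝ) :
    variance (fun ω => Real.exp (b ^ 2 / 2) * Real.cos (a + b * χ ω)) μ
        = (Real.exp (b ^ 2) - Real.exp (-b ^ 2)) / 2
          - (1 - Real.exp (-b ^ 2)) * (Real.cos a) ^ 2 ∧
    variance (fun ω => Real.exp (b ^ 2 / 2) * Real.cos (a + b * χ ω)) μ
        ≤ b ^ 2 * Real.exp (b ^ 2) := by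
  have hχ : AEMeasurable χ μ := .of_map_ne_zero (hlaw ▸ IsProbabilityMeasure.ne_zero _)
  have hvar : Var[fun ω ↦ exp (b ^ 2 / 2) * cos (a + b * χ ω); μ]
      = exp (b ^ 2) * Var[fun x ↦ cos (a + b * x); gaussianReal 0 1] := by
    rw [variance_const_mul, ← hlaw, variance_map (by fun_prop) hχ, Function.comp_def,
      ← exp_nat_mul]
    ring_nf
  have hidentity : Var[fun ω ↦ exp (b ^ 2 / 2) * cos (a + b * χ ω); μ]
      = (exp (b ^ 2) - exp (-b ^ 2)) / 2 - (1 - exp (-b ^ 2)) * cos a ^ 2 := by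
    have h₁ : exp (b ^ 2) * exp (-(2 * b ^ 2)) = exp (-b ^ 2) := by rw [← exp_add]; ring_nf
    have h₂ : exp (b ^ 2) * exp (-b ^ 2) = 1 := by rw [← exp_add]; simp
    rw [hvar, variance_cos_add_mul_gaussianReal]
    simp only [NNReal.coe_one, one_mul, mul_one, mul_zero, add_zero]
    linear_combination (cos (2 * a) / 2) * h₁ - cos a ^ 2 * h₂ + exp (-b ^ 2) / 2 * cos_two_mul a
  refine ⟨hidentity, hidentity ▸ ?_⟩
  have hcorr : 0 ≤ (1 - exp (-b ^ 2)) * cos a ^ 2 :=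
    mul_nonneg (sub_nonneg.2 (exp_le_one_iff.2 (by nlinarith [sq_nonneg b]))) (sq_nonneg _)
  have hsinh := sinh_le_mul_exp (b ^ 2)
  rw [sinh_eq] at hsinh
  linarith

/-- Variance of the bias-corrected cosine of a standard Gaussian random variable. -/
theorem gaussian_bias_corrected_cosine_variance
    {Ω : Type*} [MeasurableSpace Ω] (μ : Measure Ω) [IsProbabilityMeasure μ]
    (χ : Ω → ℝ) (hχ : Measurable χ) (hlaw : Measure.map χ μ = gaussianReal 0 1)
    (a b : ℝ) :
    variance (fun ω => Real.exp (b ^ 2 / 2) * Real.cos (a + b * χ ω)) μ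
        = (Real.exp (b ^ 2) - Real.exp (-b ^ 2)) / 2
          - (1 - Real.exp (-b ^ 2)) * (Real.cos a) ^ 2 ∧
    variance (fun ω => Real.exp (b ^ 2 / 2) * Real.cos (a + b * χ ω)) μ
        ≤ b ^ 2 * Real.exp (b ^ 2) :=
  gaussian_bias_corrected_cosine_variance_general μ χ hlaw a b
end

section
/- Let X and Y be real random variables with cumulative distribution functions F_X(x) = P(X ≤ x) and F_Y(x) = P(Y ≤ x), and assume ∫_{ℝ} |F_X(x) − F_Y(x)| dx < ∞. Then for every real λ: |E[cos(λX)] − E[cos(λY)]| ≤ |λ| · ∫_{ℝ} |F_X(x) − F_Y(x)| dx, and the same bound holds with sin in place of cos. -/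
/-!
Write `⌊Z⌉ₙ` for `Z` clamped to `[-n, n]`. If `g` is C¹ with `|g'| ≤ C`, then
`g ⌊Z⌉ₙ = g (-n) + ∫_{(-n, n]} 1{t < Z} g'(t) dt`, and Fubini turns its expectation into
`g (-n) + ∫_{(-n, n]} g'(t) P(t < Z) dt`. Since `P(t < X) - P(t < Y) = F_Y(t) - F_X(t)`, the
truncated moments differ by at most `C ∫ |F_X - F_Y|`, and dominated convergence (`g` bounded)
lets `n → ∞`. The truncation is needed because `X` and `Y` need not be integrable.
-/

open MeasureTheory Set Filter Topology

theorem integral_Ioc_indicator_Iio_eq_sub {g g' : ℝ → ℝ} (hg : ∀ t, HasDerivAt g (g' t) t)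
    (hg' : Continuous g') (a b c : ℝ) :
    ∫ t in Ioc b c, (Iio a).indicator g' t = g (max b (min a c)) - g b := by
  have hae : (Iio a).indicator g' =ᵐ[volume.restrict (Ioc b c)] (Iic a).indicator g' :=
    ae_restrict_of_ae (indicator_ae_eq_of_ae_eq_set Iio_ae_eq_Iic)
  rw [integral_congr_ae hae, integral_indicator measurableSet_Iic,
    Measure.restrict_restrict measurableSet_Iic, inter_comm, Ioc_inter_Iic, inf_comm]
  rcases le_total b (min a c) with h | h
  · rw [max_eq_right h, ← intervalIntegral.integral_of_le h]
    exact intervalIntegral.integral_eq_sub_of_hasDerivAt (fun t _ => hg t)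
      (hg'.intervalIntegrable _ _)
  · simp [max_eq_left h, Ioc_eq_empty_of_le h]

theorem eventually_max_min_natCast_eq (x : ℝ) :
    ∀ᶠ n : ℕ in atTop, max (-(n : ℝ)) (min x n) = x := by
  filter_upwards [eventually_ge_atTop ⌈|x|⌉₊] with n hn
  obtain ⟨hlow, hhigh⟩ := abs_le.mp ((Nat.le_ceil |x|).trans (Nat.cast_le.mpr hn))
  rw [min_eq_left hhigh, max_eq_right hlow]

section

variable {Ω : Type*} [MeasurableSpace Ω] {μ : Measure Ω} [IsFiniteMeasure μ]
  {X Y Z : Ω → ℝ} {g g' : ℝ → ℝ} {s : Set ℝ}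

theorem integrable_indicator_Iio_prod (hZ : Measurable Z) (hg' : IntegrableOn g' s) :
    Integrable (fun p : Ω × ℝ => (Iio (Z p.1)).indicator g' p.2)
      (μ.prod (volume.restrict s)) := by
  have hrepr : (fun p : Ω × ℝ => (Iio (Z p.1)).indicator g' p.2)
      = {p : Ω × ℝ | p.2 < Z p.1}.indicator (fun p => g' p.2) := by
    ext p; simp [indicator_apply]
  rw [hrepr]
  exact (hg'.comp_snd μ).indicator (measurableSet_lt measurable_snd (hZ.comp measurable_fst))

theorem integrableOn_mul_measureReal_lt (hg' : IntegrableOn g' s) :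
    IntegrableOn (fun t => g' t * μ.real {ω | t < Z ω}) s := by
  have hanti : Antitone fun t => μ.real {ω | t < Z ω} := fun t u htu =>
    measureReal_mono fun ω (h : u < Z ω) => htu.trans_lt h
  refine (hg'.norm.mul_const (μ.real univ)).mono'
    (hg'.aestronglyMeasurable.mul hanti.measurable.aestronglyMeasurable) ?_
  filter_upwards with t
  rw [norm_mul, Real.norm_of_nonneg measureReal_nonneg]
  exact mul_le_mul_of_nonneg_left (measureReal_mono (subset_univ _)) (norm_nonneg _)

theorem integral_integral_indicator_Iio (hZ : Measurable Z) (hs : MeasurableSet s)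
    (hg' : IntegrableOn g' s) :
    ∫ ω, (∫ t in s, (Iio (Z ω)).indicator g' t) ∂μ = ∫ t in s, g' t * μ.real {ω | t < Z ω} := by
  rw [integral_integral_swap (integrable_indicator_Iio_prod hZ hg')]
  refine setIntegral_congr_fun hs fun t _ => ?_
  have hind : (fun ω => (Iio (Z ω)).indicator g' t) = {ω | t < Z ω}.indicator fun _ => g' t := by
    ext ω; simp [indicator_apply]
  rw [hind, integral_indicator_const _ (measurableSet_lt measurable_const hZ), smul_eq_mul,
    mul_comm]

theorem measureReal_lt_eq_univ_sub (hZ : Measurable Z) (t : ℝ) :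
    μ.real {ω | t < Z ω} = μ.real univ - μ.real {ω | Z ω ≤ t} := by
  rw [← measureReal_compl (measurableSet_le hZ measurable_const)]
  congr 1
  ext ω
  simp

theorem integral_comp_max_min_eq (hg : ∀ t, HasDerivAt g (g' t) t) (hg' : Continuous g')
    (hZ : Measurable Z) (b c : ℝ) :
    ∫ ω, g (max b (min (Z ω) c)) ∂μ
      = μ.real univ * g b + ∫ t in Ioc b c, g' t * μ.real {ω | t < Z ω} := by
  have hg'Ioc : IntegrableOn g' (Ioc b c) := hg'.integrableOn_Ioc
  have hrepr : (fun ω => g (max b (min (Z ω) c)))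
      = fun ω => g b + ∫ t in Ioc b c, (Iio (Z ω)).indicator g' t := by
    ext ω; rw [integral_Ioc_indicator_Iio_eq_sub hg hg']; ring
  rw [hrepr, integral_add (integrable_const _)
    (integrable_indicator_Iio_prod hZ hg'Ioc).integral_prod_left, integral_const, smul_eq_mul,
    integral_integral_indicator_Iio hZ measurableSet_Ioc hg'Ioc]

theorem abs_integral_comp_max_min_sub_le (hg : ∀ t, HasDerivAt g (g' t) t)
    (hg' : Continuous g') {C : ℝ} (hC : ∀ t, |g' t| ≤ C) (hX : Measurable X) (hY : Measurable Y)
    (hint : Integrable fun x => μ.real {ω | X ω ≤ x} - μ.real {ω | Y ω ≤ x}) (b c : ℝ) :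
    |(∫ ω, g (max b (min (X ω) c)) ∂μ) - ∫ ω, g (max b (min (Y ω) c)) ∂μ|
      ≤ C * ∫ x, |μ.real {ω | X ω ≤ x} - μ.real {ω | Y ω ≤ x}| := by
  have hg'Ioc : IntegrableOn g' (Ioc b c) := hg'.integrableOn_Ioc
  rw [integral_comp_max_min_eq hg hg' hX, integral_comp_max_min_eq hg hg' hY,
    add_sub_add_left_eq_sub, ← integral_sub (integrableOn_mul_measureReal_lt hg'Ioc)
      (integrableOn_mul_measureReal_lt hg'Ioc)]
  have hC0 : 0 ≤ C := (abs_nonneg _).trans (hC 0)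
  calc |∫ t in Ioc b c, g' t * μ.real {ω | t < X ω} - g' t * μ.real {ω | t < Y ω}|
      ≤ ∫ t in Ioc b c, C * |μ.real {ω | X ω ≤ t} - μ.real {ω | Y ω ≤ t}| := by
        rw [← Real.norm_eq_abs]
        refine norm_integral_le_of_norm_le (hint.abs.const_mul C).integrableOn
          (Eventually.of_forall fun t => ?_)
        rw [measureReal_lt_eq_univ_sub hX, measureReal_lt_eq_univ_sub hY, Real.norm_eq_abs,
          ← mul_sub, abs_mul, sub_sub_sub_cancel_left, abs_sub_comm]
        exact mul_le_mul_of_nonneg_right (hC t) (abs_nonneg _)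
    _ = C * ∫ t in Ioc b c, |μ.real {ω | X ω ≤ t} - μ.real {ω | Y ω ≤ t}| :=
        integral_const_mul _ _
    _ ≤ C * ∫ x, |μ.real {ω | X ω ≤ x} - μ.real {ω | Y ω ≤ x}| :=
        mul_le_mul_of_nonneg_left
          (setIntegral_le_integral hint.abs (Eventually.of_forall fun _ => abs_nonneg _)) hC0

theorem tendsto_integral_comp_max_min (hg : Continuous g) {M : ℝ} (hM : ∀ t, |g t| ≤ M)
    (hZ : Measurable Z) :
    Tendsto (fun n : ℕ => ∫ ω, g (max (-(n : ℝ)) (min (Z ω) n)) ∂μ) atTop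
      (𝓝 (∫ ω, g (Z ω) ∂μ)) := by
  refine tendsto_integral_of_dominated_convergence (fun _ => M)
    (fun _ => (hg.measurable.comp
      (measurable_const.max (hZ.min measurable_const))).aestronglyMeasurable)
    (integrable_const M) (fun _ => Eventually.of_forall fun ω => hM _)
    (Eventually.of_forall fun ω => ?_)
  exact tendsto_const_nhds.congr' <|
    (eventually_max_min_natCast_eq (Z ω)).mono fun n hn => congrArg g hn.symm

theorem abs_integral_comp_sub_le_mul_integral_abs_cdf_sub
    (hg : ∀ t, HasDerivAt g (g' t) t) (hg' : Continuous g') {M C : ℝ} (hM : ∀ t, |g t| ≤ M)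
    (hC : ∀ t, |g' t| ≤ C) (hX : Measurable X) (hY : Measurable Y)
    (hint : Integrable fun x => μ.real {ω | X ω ≤ x} - μ.real {ω | Y ω ≤ x}) :
    |(∫ ω, g (X ω) ∂μ) - ∫ ω, g (Y ω) ∂μ|
      ≤ C * ∫ x, |μ.real {ω | X ω ≤ x} - μ.real {ω | Y ω ≤ x}| := by
  have hgc : Continuous g := continuous_iff_continuousAt.mpr fun t => (hg t).continuousAt
  exact le_of_tendsto
    ((tendsto_integral_comp_max_min hgc hM hX).sub (tendsto_integral_comp_max_min hgc hM hY)).abs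
    (Eventually.of_forall fun _ => abs_integral_comp_max_min_sub_le hg hg' hC hX hY hint _ _)

end

/-- Comparison of trigonometric moments via the L¹ distance between distribution functions. -/
theorem trig_moment_comparison_via_cdf
    {Ω : Type*} [MeasurableSpace Ω] (μ : Measure Ω) [IsProbabilityMeasure μ]
    (X Y : Ω → ℝ) (hX : Measurable X) (hY : Measurable Y)
    (hint : Integrable
      (fun x : ℝ => (μ {ω | X ω ≤ x}).toReal - (μ {ω | Y ω ≤ x}).toReal)
      (volume : Measure ℝ))
    (l : ℝ) :
    |(∫ ω, Real.cos (l * X ω) ∂μ) - ∫ ω, Real.cos (l * Y ω) ∂μ|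
        ≤ |l| * ∫ x : ℝ, |(μ {ω | X ω ≤ x}).toReal - (μ {ω | Y ω ≤ x}).toReal| ∧
    |(∫ ω, Real.sin (l * X ω) ∂μ) - ∫ ω, Real.sin (l * Y ω) ∂μ|
        ≤ |l| * ∫ x : ℝ, |(μ {ω | X ω ≤ x}).toReal - (μ {ω | Y ω ≤ x}).toReal| := by
  have hlin (t : ℝ) : HasDerivAt (fun x => l * x) l t := by
    simpa using (hasDerivAt_id t).const_mul l
  constructor
  · refine abs_integral_comp_sub_le_mul_integral_abs_cdf_sub (fun t => (hlin t).cos)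
      (by fun_prop) (fun _ => Real.abs_cos_le_one _) (fun t => ?_) hX hY hint
    rw [abs_mul, abs_neg]
    exact mul_le_of_le_one_left (abs_nonneg l) (Real.abs_sin_le_one _)
  · refine abs_integral_comp_sub_le_mul_integral_abs_cdf_sub (fun t => (hlin t).sin)
      (by fun_prop) (fun _ => Real.abs_sin_le_one _) (fun t => ?_) hX hY hint
    rw [abs_mul]
    exact mul_le_of_le_one_left (abs_nonneg l) (Real.abs_cos_le_one _)
end

section
/- Let X be a real random variable and D ≥ 0 a constant such that |P(X ≤ x) − F_{N(0,1)}(x)| ≤ D/(1 + x²) for all real x, where F_{N(0,1)} is the standard normal cumulative distribution function. Then for every real λ: |E[cos(λX)] − e^{−λ²/2}| ≤ π |λ| D and |E[sin(λX)]| ≤ π |λ| D. -/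
/-!
Write `F_ν` for the distribution function of `ν`. For `g` with `‖g'‖ ≤ B`, integrating
`g x - g 0 = ∫ g' t (1_{t < x} - 1_{t < 0}) dt` in `x` and using Fubini gives
`∫ g dν - ∫ g dγ = ∫ g' t (F_γ t - F_ν t) dt`, hence
`‖∫ g dν - ∫ g dγ‖ ≤ B ∫ |F_ν - F_γ| ≤ π B D`, since `∫ (1 + t²)⁻¹ = π`.
As `ν` need not have a first moment, Fubini is applied to `g` clamped to `[-R, R]`, and then
`R → ∞` by dominated convergence. For `g x = exp (i λ x)` (so `B = |λ|`) this bounds the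
distance between the characteristic functions of `X` and of `N(0,1)` by `π |λ| D`; the cosine
and sine moments are the real and imaginary parts.
-/

open MeasureTheory ProbabilityTheory Set Filter Topology Function Complex

def clamp (R x : ℝ) : ℝ := max (-R) (min R x)

lemma continuous_clamp (R : ℝ) : Continuous (clamp R) := by
  unfold clamp; fun_prop

lemma clamp_of_abs_le {R x : ℝ} (h : |x| ≤ R) : clamp R x = x := by
  rw [abs_le] at h
  rw [clamp, min_eq_right h.2, max_eq_right h.1]

noncomputable def stepKernel (x t : ℝ) : ℝ := (Ioi t).indicator 1 x - (Iio 0).indicator 1 t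

lemma abs_stepKernel_le_one (x t : ℝ) : |stepKernel x t| ≤ 1 := by
  unfold stepKernel
  simp only [indicator_apply, mem_Ioi, mem_Iio, Pi.one_apply]
  split_ifs <;> norm_num

lemma measurable_stepKernel : Measurable (uncurry stepKernel) := by
  have h : uncurry stepKernel =
      {p : ℝ × ℝ | p.2 < p.1}.indicator 1 - {p : ℝ × ℝ | p.2 < 0}.indicator 1 := rfl
  rw [h]
  exact (measurable_one.indicator (measurableSet_lt measurable_snd measurable_fst)).sub
    (measurable_one.indicator (measurableSet_lt measurable_snd measurable_const))

lemma stepKernel_clamp {R : ℝ} (hR : 0 ≤ R) (x t : ℝ) :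
    stepKernel (clamp R x) t = (Ico (-R) R).indicator (stepKernel x) t := by
  simp only [stepKernel, clamp, indicator_apply, mem_Ioi, mem_Iio, mem_Ico, Pi.one_apply,
    lt_max_iff, lt_min_iff]
  split_ifs <;> grind

lemma integral_stepKernel (ν : Measure ℝ) [IsProbabilityMeasure ν] (t : ℝ) :
    ∫ x, stepKernel x t ∂ν = (Ici 0).indicator 1 t - cdf ν t := by
  simp only [stepKernel]
  rw [integral_sub ((integrable_const 1).indicator measurableSet_Ioi)
    (integrable_const _), integral_indicator_one measurableSet_Ioi, integral_const,
    probReal_univ, one_smul, ← compl_Iic, measureReal_compl measurableSet_Iic, probReal_univ,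
    cdf_eq_real]
  by_cases ht : 0 ≤ t <;> simp [ht, not_le.1]

section DerivativeBound

variable {E : Type*} [NormedAddCommGroup E] [NormedSpace ℝ E] [CompleteSpace E]
  {g g' : ℝ → E} {B : ℝ}

lemma stronglyMeasurable_of_hasDerivAt (hg : ∀ x, HasDerivAt g (g' x) x) :
    StronglyMeasurable g' := by
  rw [show g' = deriv g from funext fun x => (hg x).deriv.symm]
  exact stronglyMeasurable_deriv g

lemma integrableOn_of_hasDerivAt (hg : ∀ x, HasDerivAt g (g' x) x) (hg' : ∀ x, ‖g' x‖ ≤ B)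
    {s : Set ℝ} (hs : volume s ≠ ⊤) : IntegrableOn g' s :=
  Measure.integrableOn_of_bounded hs (stronglyMeasurable_of_hasDerivAt hg).aestronglyMeasurable
    (ae_of_all _ hg')

lemma integral_stepKernel_smul (hg : ∀ x, HasDerivAt g (g' x) x) (hg' : ∀ x, ‖g' x‖ ≤ B)
    (x : ℝ) : ∫ t, stepKernel x t • g' t = g x - g 0 := by
  have hsplit : (fun t => stepKernel x t • g' t) =
      fun t => (Ico 0 x).indicator g' t - (Ico x 0).indicator g' t := by
    ext t
    simp only [stepKernel, sub_smul, indicator_apply, mem_Ioi, mem_Iio, mem_Ico, Pi.one_apply]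
    split_ifs <;> simp <;> grind
  have hint : ∀ a b : ℝ, IntegrableOn g' (Ico a b) :=
    fun a b => integrableOn_of_hasDerivAt hg hg' measure_Ico_lt_top.ne
  rw [hsplit, integral_sub ((hint 0 x).integrable_indicator measurableSet_Ico)
    ((hint x 0).integrable_indicator measurableSet_Ico), integral_indicator measurableSet_Ico,
    integral_indicator measurableSet_Ico, integral_Ico_eq_integral_Ioo,
    integral_Ico_eq_integral_Ioo, ← integral_Ioc_eq_integral_Ioo, ← integral_Ioc_eq_integral_Ioo,
    ← intervalIntegral.integral_eq_sub_of_hasDerivAt (fun t _ => hg t)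
      (integrableOn_of_hasDerivAt hg hg' measure_Icc_lt_top.ne).intervalIntegrable]
  rfl

lemma setIntegral_stepKernel_smul (hg : ∀ x, HasDerivAt g (g' x) x) (hg' : ∀ x, ‖g' x‖ ≤ B)
    {R : ℝ} (hR : 0 ≤ R) (x : ℝ) :
    ∫ t in Ico (-R) R, stepKernel x t • g' t = g (clamp R x) - g 0 := by
  simp_rw [← integral_stepKernel_smul hg hg', stepKernel_clamp hR, ← indicator_smul_apply_left,
    integral_indicator measurableSet_Ico]

lemma integral_comp_clamp (ν : Measure ℝ) [IsProbabilityMeasure ν]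
    (hg : ∀ x, HasDerivAt g (g' x) x) (hg' : ∀ x, ‖g' x‖ ≤ B) {R : ℝ} (hR : 0 ≤ R) :
    ∫ x, g (clamp R x) ∂ν = g 0 + ∫ t in Ico (-R) R, ((Ici 0).indicator 1 t - cdf ν t) • g' t := by
  have : IsFiniteMeasure (volume.restrict (Ico (-R) R)) :=
    isFiniteMeasure_restrict.2 measure_Ico_lt_top.ne
  have hprod : Integrable (uncurry fun (x t : ℝ) => stepKernel x t • g' t)
      (ν.prod (volume.restrict (Ico (-R) R))) := by
    refine Integrable.of_bound ?_ B (ae_of_all _ fun p => ?_)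
    · exact measurable_stepKernel.aestronglyMeasurable.smul
        ((stronglyMeasurable_of_hasDerivAt hg).comp_measurable measurable_snd).aestronglyMeasurable
    · calc ‖stepKernel p.1 p.2 • g' p.2‖ = |stepKernel p.1 p.2| * ‖g' p.2‖ := norm_smul _ _
        _ ≤ 1 * B := mul_le_mul (abs_stepKernel_le_one _ _) (hg' _) (norm_nonneg _) zero_le_one
        _ = B := one_mul B
  calc ∫ x, g (clamp R x) ∂ν = ∫ x, (g 0 + ∫ t in Ico (-R) R, stepKernel x t • g' t) ∂ν := by
        simp_rw [setIntegral_stepKernel_smul hg hg' hR, add_sub_cancel]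
    _ = g 0 + ∫ x, (∫ t in Ico (-R) R, stepKernel x t • g' t) ∂ν := by
        have hinner : Integrable (fun x => ∫ t in Ico (-R) R, stepKernel x t • g' t) ν :=
          hprod.integral_prod_left
        rw [integral_add (integrable_const _) hinner, integral_const,
          probReal_univ, one_smul]
    _ = g 0 + ∫ t in Ico (-R) R, ∫ x, stepKernel x t • g' t ∂ν := by
        congr 1
        exact integral_integral_swap hprod
    _ = g 0 + ∫ t in Ico (-R) R, ((Ici 0).indicator 1 t - cdf ν t) • g' t := by
        simp_rw [integral_smul_const, integral_stepKernel]

lemma norm_integral_comp_clamp_sub_le (ν γ : Measure ℝ) [IsProbabilityMeasure ν]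
    [IsProbabilityMeasure γ] (hg : ∀ x, HasDerivAt g (g' x) x) (hg' : ∀ x, ‖g' x‖ ≤ B)
    (hF : Integrable fun t => cdf ν t - cdf γ t) {R : ℝ} (hR : 0 ≤ R) :
    ‖∫ x, g (clamp R x) ∂ν - ∫ x, g (clamp R x) ∂γ‖ ≤ B * ∫ t, |cdf ν t - cdf γ t| := by
  have hB : 0 ≤ B := (norm_nonneg _).trans (hg' 0)
  have hint : ∀ (m : Measure ℝ) [IsProbabilityMeasure m],
      IntegrableOn (fun t => ((Ici 0).indicator 1 t - cdf m t) • g' t) (Ico (-R) R) := by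
    intro m _
    refine Measure.integrableOn_of_bounded measure_Ico_lt_top.ne ?_ (M := B)
      (ae_of_all _ fun t => ?_)
    · exact (((measurable_one.indicator measurableSet_Ici).sub
        (cdf m).mono.measurable).aestronglyMeasurable).smul
        (stronglyMeasurable_of_hasDerivAt hg).aestronglyMeasurable
    · have h1 : |(Ici 0).indicator 1 t - cdf m t| ≤ 1 := by
        have := cdf_nonneg m t
        have := cdf_le_one m t
        by_cases ht : 0 ≤ t <;> simp [ht, abs_le] <;> constructor <;> linarith
      calc ‖((Ici 0).indicator 1 t - cdf m t) • g' t‖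
          = |(Ici 0).indicator 1 t - cdf m t| * ‖g' t‖ := norm_smul _ _
        _ ≤ 1 * B := mul_le_mul h1 (hg' t) (norm_nonneg _) zero_le_one
        _ = B := one_mul B
  rw [integral_comp_clamp ν hg hg' hR, integral_comp_clamp γ hg hg' hR, add_sub_add_left_eq_sub,
    ← integral_sub (hint ν) (hint γ)]
  calc ‖∫ t in Ico (-R) R,
        (((Ici 0).indicator 1 t - cdf ν t) • g' t - ((Ici 0).indicator 1 t - cdf γ t) • g' t)‖
      ≤ ∫ t in Ico (-R) R, B * |cdf ν t - cdf γ t| := by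
        refine norm_integral_le_of_norm_le (hF.abs.const_mul B).integrableOn
          (ae_of_all _ fun t => ?_)
        rw [← sub_smul, sub_sub_sub_cancel_left, norm_smul, Real.norm_eq_abs, abs_sub_comm,
          mul_comm]
        exact mul_le_mul_of_nonneg_right (hg' t) (abs_nonneg _)
    _ ≤ ∫ t, B * |cdf ν t - cdf γ t| :=
        setIntegral_le_integral (hF.abs.const_mul B) (ae_of_all _ fun t => by positivity)
    _ = B * ∫ t, |cdf ν t - cdf γ t| := integral_const_mul _ _

theorem norm_integral_sub_le_mul_integral_abs_cdf_sub (ν γ : Measure ℝ) [IsProbabilityMeasure ν]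
    [IsProbabilityMeasure γ] (hg : ∀ x, HasDerivAt g (g' x) x) (hg' : ∀ x, ‖g' x‖ ≤ B)
    {C : ℝ} (hgC : ∀ x, ‖g x‖ ≤ C) (hF : Integrable fun t => cdf ν t - cdf γ t) :
    ‖∫ x, g x ∂ν - ∫ x, g x ∂γ‖ ≤ B * ∫ t, |cdf ν t - cdf γ t| := by
  have hcont : Continuous g := continuous_iff_continuousAt.2 fun x => (hg x).continuousAt
  have hlim : ∀ (m : Measure ℝ) [IsProbabilityMeasure m],
      Tendsto (fun n : ℕ => ∫ x, g (clamp n x) ∂m) atTop (𝓝 (∫ x, g x ∂m)) := by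
    intro m _
    refine tendsto_integral_of_dominated_convergence (fun _ => C)
      (fun n => (hcont.comp (continuous_clamp _)).aestronglyMeasurable) (integrable_const C)
      (fun n => ae_of_all _ fun x => hgC _) (ae_of_all _ fun x => tendsto_const_nhds.congr' ?_)
    filter_upwards [eventually_ge_atTop ⌈|x|⌉₊] with n hn
    rw [clamp_of_abs_le ((Nat.le_ceil _).trans (Nat.cast_le.2 hn))]
  exact le_of_tendsto ((hlim ν).sub (hlim γ)).norm (Eventually.of_forall fun n =>
    norm_integral_comp_clamp_sub_le ν γ hg hg' hF n.cast_nonneg)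

end DerivativeBound

theorem norm_charFun_sub_charFun_le (ν γ : Measure ℝ) [IsProbabilityMeasure ν]
    [IsProbabilityMeasure γ] {D : ℝ} (h : ∀ t, |cdf ν t - cdf γ t| ≤ D / (1 + t ^ 2)) (l : ℝ) :
    ‖charFun ν l - charFun γ l‖ ≤ Real.pi * |l| * D := by
  have hbound : Integrable fun t : ℝ => D * (1 + t ^ 2)⁻¹ := integrable_inv_one_add_sq.const_mul D
  have hF : Integrable fun t => cdf ν t - cdf γ t :=
    hbound.mono' ((cdf ν).mono.measurable.sub (cdf γ).mono.measurable).aestronglyMeasurable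
      (ae_of_all _ fun t => by simpa only [Real.norm_eq_abs, div_eq_mul_inv] using h t)
  have hderiv : ∀ x : ℝ,
      HasDerivAt (fun x : ℝ => cexp (l * x * I)) (l * I * cexp (l * x * I)) x := fun x => by
    convert (((hasDerivAt_id x).ofReal_comp.const_mul (l : ℂ)).mul_const I).cexp using 1
    · rfl
    · simp only [id, ofReal_one, mul_one]
      ring
  have hnorm : ∀ x : ℝ, ‖cexp (l * x * I)‖ = 1 := fun x => by
    rw [← ofReal_mul, norm_exp_ofReal_mul_I]
  simp_rw [charFun_apply_real]
  calc ‖∫ x, cexp (l * x * I) ∂ν - ∫ x, cexp (l * x * I) ∂γ‖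
      ≤ |l| * ∫ t, |cdf ν t - cdf γ t| :=
        norm_integral_sub_le_mul_integral_abs_cdf_sub ν γ hderiv
          (fun x => by rw [norm_mul, norm_mul, hnorm, norm_I, norm_real, Real.norm_eq_abs,
            mul_one, mul_one])
          (fun x => (hnorm x).le) hF
    _ ≤ |l| * ∫ t, D * (1 + t ^ 2)⁻¹ := by
        refine mul_le_mul_of_nonneg_left (integral_mono hF.abs hbound fun t => ?_) (abs_nonneg l)
        simpa only [div_eq_mul_inv] using h t
    _ = Real.pi * |l| * D := by
        rw [integral_const_mul, integral_univ_inv_one_add_sq]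
        ring

section CharFunMap

variable {Ω : Type*} [MeasurableSpace Ω] (μ : Measure Ω) {X : Ω → ℝ}

lemma integrable_cexp_mul_I [IsFiniteMeasure μ] (hX : Measurable X) (l : ℝ) :
    Integrable (fun ω => cexp ((l * X ω : ℝ) * I)) μ :=
  Integrable.of_bound (by fun_prop) 1 (ae_of_all _ fun ω => (norm_exp_ofReal_mul_I _).le)

lemma charFun_map_eq_integral (hX : Measurable X) (l : ℝ) :
    charFun (μ.map X) l = ∫ ω, cexp ((l * X ω : ℝ) * I) ∂μ := by
  rw [charFun_apply_real, integral_map hX.aemeasurable (by fun_prop)]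
  push_cast
  rfl

lemma re_charFun_map [IsFiniteMeasure μ] (hX : Measurable X) (l : ℝ) :
    (charFun (μ.map X) l).re = ∫ ω, Real.cos (l * X ω) ∂μ := by
  rw [charFun_map_eq_integral μ hX, ← RCLike.re_to_complex,
    ← integral_re (integrable_cexp_mul_I μ hX l)]
  simp only [RCLike.re_to_complex, exp_ofReal_mul_I_re]

lemma im_charFun_map [IsFiniteMeasure μ] (hX : Measurable X) (l : ℝ) :
    (charFun (μ.map X) l).im = ∫ ω, Real.sin (l * X ω) ∂μ := by
  rw [charFun_map_eq_integral μ hX, ← RCLike.im_to_complex,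
    ← integral_im (integrable_cexp_mul_I μ hX l)]
  simp only [RCLike.im_to_complex, exp_ofReal_mul_I_im]

end CharFunMap

lemma charFun_gaussianReal_zero_one (l : ℝ) :
    charFun (gaussianReal 0 1) l = (Real.exp (-l ^ 2 / 2) : ℝ) := by
  rw [charFun_gaussianReal, ofReal_exp]
  push_cast
  ring_nf

theorem trig_moments_near_gaussian_general
    {Ω : Type*} [MeasurableSpace Ω] (μ : Measure Ω) [IsProbabilityMeasure μ]
    (X : Ω → ℝ) (hX : Measurable X) (D : ℝ)
    (hclose : ∀ x : ℝ,
      |(μ {ω | X ω ≤ x}).toReal - cdf (gaussianReal 0 1) x| ≤ D / (1 + x ^ 2))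
    (l : ℝ) :
    |(∫ ω, Real.cos (l * X ω) ∂μ) - Real.exp (-l ^ 2 / 2)| ≤ Real.pi * |l| * D ∧
    |∫ ω, Real.sin (l * X ω) ∂μ| ≤ Real.pi * |l| * D := by
  have : IsProbabilityMeasure (μ.map X) := Measure.isProbabilityMeasure_map hX.aemeasurable
  have hcdf : ∀ t, |cdf (μ.map X) t - cdf (gaussianReal 0 1) t| ≤ D / (1 + t ^ 2) := fun t => by
    rw [cdf_eq_real, measureReal_def, Measure.map_apply hX measurableSet_Iic]
    exact hclose t
  have key := norm_charFun_sub_charFun_le _ _ hcdf l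
  rw [charFun_gaussianReal_zero_one] at key
  constructor
  · calc |(∫ ω, Real.cos (l * X ω) ∂μ) - Real.exp (-l ^ 2 / 2)|
        = |(charFun (μ.map X) l - (Real.exp (-l ^ 2 / 2) : ℝ)).re| := by
          rw [sub_re, ofReal_re, re_charFun_map μ hX]
      _ ≤ Real.pi * |l| * D := (abs_re_le_norm _).trans key
  · calc |∫ ω, Real.sin (l * X ω) ∂μ|
        = |(charFun (μ.map X) l - (Real.exp (-l ^ 2 / 2) : ℝ)).im| := by
          rw [sub_im, ofReal_im, sub_zero, im_charFun_map μ hX]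
      _ ≤ Real.pi * |l| * D := (abs_im_le_norm _).trans key

/-- Trigonometric moments of a random variable close to a standard Gaussian in the
nonuniform Kolmogorov sense. -/
theorem trig_moments_near_gaussian
    {Ω : Type*} [MeasurableSpace Ω] (μ : Measure Ω) [IsProbabilityMeasure μ]
    (X : Ω → ℝ) (hX : Measurable X) (D : ℝ) (hD : 0 ≤ D)
    (hclose : ∀ x : ℝ,
      |(μ {ω | X ω ≤ x}).toReal - cdf (gaussianReal 0 1) x| ≤ D / (1 + x ^ 2))
    (l : ℝ) :
    |(∫ ω, Real.cos (l * X ω) ∂μ) - Real.exp (-l ^ 2 / 2)| ≤ Real.pi * |l| * D ∧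
    |∫ ω, Real.sin (l * X ω) ∂μ| ≤ Real.pi * |l| * D :=
  trig_moments_near_gaussian_general μ X hX D hclose l
end

section
/- Let X be a real random variable and D ≥ 0 a constant such that |P(X ≤ x) − F_{N(0,1)}(x)| ≤ D/(1 + x²) for all real x. Then for all real a and all λ > 0: |e^{λ²/2} · E[cos(a + λX)] − cos(a)| ≤ 2π λ D e^{λ²/2}. That is, the exponentially bias-corrected cosine of a + λX estimates cos(a) with bias at most 2πλD e^{λ²/2}. -/
/-!
Write `Z` for a standard Gaussian and `f x = cos (a + l x)`, so that `E f(Z) = e^{-l²/2} cos a`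
and the quantity to bound is `e^{l²/2} |E f(X) - E f(Z)|`. Integrating by parts against the
distribution function (Fubini applied to `f x - f 0 = ∫₀ˣ f'`) gives, for any law with a first
moment, `E f(X) = f 0 + ∫ f'(t) (𝟙[0 ≤ t] - F_X(t)) dt`. Subtracting the same identity for `Z`,
`|E f(X) - E f(Z)| ≤ ‖f'‖_∞ ∫ |F_X - Φ| ≤ l D ∫ (1 + t²)⁻¹ dt = π l D`. The first moment of `X`
comes for free: the tails of `X` are those of `Z` up to the integrable error `D / (1 + t²)`.
-/

open MeasureTheory ProbabilityTheory Real Set Function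

noncomputable def orientedIndicator (x t : ℝ) : ℝ :=
  (Ico 0 x).indicator 1 t - (Ico x 0).indicator 1 t

/-- For a probability measure this is `ν (Ioi t)` when `0 ≤ t` and `-ν (Iic t)` when `t < 0`. -/
noncomputable def signedTail (ν : Measure ℝ) (t : ℝ) : ℝ := (Ici 0).indicator 1 t - cdf ν t

lemma orientedIndicator_eq_indicator_Ioi {t : ℝ} (ht : 0 ≤ t) (x : ℝ) :
    orientedIndicator x t = (Ioi t).indicator 1 x := by
  by_cases hx : t < x <;> simp [orientedIndicator, ht, hx, not_lt.2 ht]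

lemma orientedIndicator_eq_neg_indicator_Iic {t : ℝ} (ht : t < 0) (x : ℝ) :
    orientedIndicator x t = -(Iic t).indicator 1 x := by
  by_cases hx : x ≤ t <;> simp [orientedIndicator, ht, hx, not_le.2 ht]

lemma orientedIndicator_eq_indicator_Ico {x : ℝ} (hx : 0 ≤ x) :
    orientedIndicator x = (Ico 0 x).indicator 1 := by
  ext t; simp [orientedIndicator, Ico_eq_empty_of_le hx]

lemma orientedIndicator_eq_neg_indicator_Ico {x : ℝ} (hx : x < 0) :
    orientedIndicator x = -(Ico x 0).indicator 1 := by
  ext t; simp [orientedIndicator, Ico_eq_empty_of_le hx.le]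

lemma measurable_uncurry_orientedIndicator : Measurable (uncurry orientedIndicator) := by
  change Measurable fun p : ℝ × ℝ =>
    {p : ℝ × ℝ | p.2 ∈ Ico 0 p.1}.indicator 1 p - {p : ℝ × ℝ | p.2 ∈ Ico p.1 0}.indicator 1 p
  refine (measurable_const.indicator ?_).sub (measurable_const.indicator ?_)
  · exact (measurableSet_le measurable_const measurable_snd).inter
      (measurableSet_lt measurable_snd measurable_fst)
  · exact (measurableSet_le measurable_fst measurable_snd).inter
      (measurableSet_lt measurable_snd measurable_const)

lemma measurable_signedTail {ν : Measure ℝ} : Measurable (signedTail ν) :=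
  (measurable_const.indicator measurableSet_Ici).sub (cdf ν).mono.measurable

lemma integral_orientedIndicator_mul (x : ℝ) {g : ℝ → ℝ} (hg : LocallyIntegrable g) :
    ∫ t, orientedIndicator x t * g t = ∫ t in 0..x, g t := by
  have hIco : ∀ a b : ℝ, Integrable ((Ico a b).indicator g) := fun a b =>
    (integrable_indicator_iff measurableSet_Ico).2
      ((hg.integrableOn_isCompact isCompact_Icc).mono_set Ico_subset_Icc_self)
  have hsplit : (fun t => orientedIndicator x t * g t)
      = fun t => (Ico 0 x).indicator g t - (Ico x 0).indicator g t := by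
    ext t; simp [orientedIndicator, indicator_apply, sub_mul]
  rw [hsplit, integral_sub (hIco 0 x) (hIco x 0), integral_indicator measurableSet_Ico,
    integral_indicator measurableSet_Ico, integral_Ico_eq_integral_Ioc,
    integral_Ico_eq_integral_Ioc]
  rfl

lemma lintegral_enorm_indicator_one {α : Type*} [MeasurableSpace α] {μ : Measure α} {s : Set α}
    (hs : MeasurableSet s) : ∫⁻ x, ‖s.indicator (1 : α → ℝ) x‖ₑ ∂μ = μ s := by
  simp [enorm_indicator_eq_indicator_enorm, hs]

lemma lintegral_enorm_orientedIndicator_right (x : ℝ) :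
    ∫⁻ t, ‖orientedIndicator x t‖ₑ = ‖x‖ₑ := by
  rcases le_or_gt 0 x with hx | hx
  · simp_rw [orientedIndicator_eq_indicator_Ico hx, lintegral_enorm_indicator_one measurableSet_Ico,
      Real.volume_Ico, sub_zero, Real.enorm_of_nonneg hx]
  · simp_rw [orientedIndicator_eq_neg_indicator_Ico hx, Pi.neg_apply, enorm_neg,
      lintegral_enorm_indicator_one measurableSet_Ico, Real.volume_Ico, zero_sub,
      Real.enorm_eq_ofReal_abs, abs_of_neg hx]

lemma integrable_uncurry_orientedIndicator {ν : Measure ℝ} (hν : Integrable id ν) :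
    Integrable (uncurry orientedIndicator) (ν.prod volume) := by
  refine ⟨measurable_uncurry_orientedIndicator.aestronglyMeasurable, ?_⟩
  rw [hasFiniteIntegral_iff_enorm,
    lintegral_prod _ measurable_uncurry_orientedIndicator.enorm.aemeasurable]
  simp_rw [uncurry_apply_pair, lintegral_enorm_orientedIndicator_right]
  exact hν.hasFiniteIntegral

lemma locallyIntegrable_deriv_of_abs_le {f : ℝ → ℝ} {C : ℝ} (hf' : ∀ t, |deriv f t| ≤ C) :
    LocallyIntegrable (deriv f) :=
  (locallyIntegrable_const C).mono (measurable_deriv f).aestronglyMeasurable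
    (ae_of_all _ fun t => (hf' t).trans (le_abs_self C))

section ProbabilityMeasure

variable {ν : Measure ℝ} [IsProbabilityMeasure ν]

lemma integral_orientedIndicator_left (t : ℝ) :
    ∫ x, orientedIndicator x t ∂ν = signedTail ν t := by
  rcases le_or_gt 0 t with ht | ht
  · simp_rw [orientedIndicator_eq_indicator_Ioi ht, integral_indicator_one measurableSet_Ioi,
      signedTail, indicator_of_mem (mem_Ici.2 ht), cdf_eq_real, ← compl_Iic,
      probReal_compl_eq_one_sub measurableSet_Iic]
    rfl
  · simp_rw [orientedIndicator_eq_neg_indicator_Iic ht, integral_neg,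
      integral_indicator_one measurableSet_Iic, signedTail, indicator_of_notMem (notMem_Ici.2 ht),
      cdf_eq_real]
    simp

lemma lintegral_enorm_orientedIndicator_left (t : ℝ) :
    ∫⁻ x, ‖orientedIndicator x t‖ₑ ∂ν = ‖signedTail ν t‖ₑ := by
  rw [← integral_orientedIndicator_left]
  rcases le_or_gt 0 t with ht | ht
  · simp_rw [orientedIndicator_eq_indicator_Ioi ht, integral_indicator_one measurableSet_Ioi,
      lintegral_enorm_indicator_one measurableSet_Ioi]
    rw [Real.enorm_of_nonneg measureReal_nonneg, ofReal_measureReal]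
  · simp_rw [orientedIndicator_eq_neg_indicator_Iic ht, integral_neg, enorm_neg,
      integral_indicator_one measurableSet_Iic, lintegral_enorm_indicator_one measurableSet_Iic]
    rw [Real.enorm_of_nonneg measureReal_nonneg, ofReal_measureReal]

lemma lintegral_enorm_signedTail : ∫⁻ t, ‖signedTail ν t‖ₑ = ∫⁻ x, ‖x‖ₑ ∂ν := by
  calc ∫⁻ t, ‖signedTail ν t‖ₑ = ∫⁻ t, ∫⁻ x, ‖orientedIndicator x t‖ₑ ∂ν := by
        simp_rw [lintegral_enorm_orientedIndicator_left]
    _ = ∫⁻ x, ∫⁻ t, ‖orientedIndicator x t‖ₑ ∂volume ∂ν :=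
        (lintegral_lintegral_swap measurable_uncurry_orientedIndicator.enorm.aemeasurable).symm
    _ = ∫⁻ x, ‖x‖ₑ ∂ν := by simp_rw [lintegral_enorm_orientedIndicator_right]

lemma integrable_signedTail_iff : Integrable (signedTail ν) ↔ Integrable id ν := by
  simp only [Integrable, measurable_signedTail.aestronglyMeasurable,
    measurable_id.aestronglyMeasurable, hasFiniteIntegral_iff_enorm, lintegral_enorm_signedTail,
    true_and, id]

theorem integral_eq_add_integral_deriv_mul_signedTail (hν : Integrable id ν) {f : ℝ → ℝ} {C : ℝ}
    (hf : Differentiable ℝ f) (hf' : ∀ t, |deriv f t| ≤ C) :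
    ∫ x, f x ∂ν = f 0 + ∫ t, deriv f t * signedTail ν t := by
  set k : ℝ → ℝ → ℝ := fun x t => orientedIndicator x t * deriv f t
  have hk : Integrable (uncurry k) (ν.prod volume) :=
    (integrable_uncurry_orientedIndicator hν).mul_bdd
      ((measurable_deriv f).comp measurable_snd).aestronglyMeasurable (ae_of_all _ fun p => hf' p.2)
  have hloc := locallyIntegrable_deriv_of_abs_le hf'
  have hinner : ∀ x, ∫ t, k x t = f x - f 0 := fun x => by
    rw [integral_orientedIndicator_mul x hloc, intervalIntegral.integral_deriv_eq_sub
      (fun t _ => hf t) ((hloc.integrableOn_isCompact isCompact_uIcc).intervalIntegrable)]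
  have houter : ∀ t, ∫ x, k x t ∂ν = deriv f t * signedTail ν t := fun t => by
    rw [integral_mul_const, integral_orientedIndicator_left, mul_comm]
  have hf_int : Integrable f ν :=
    ((hk.integral_prod_left.congr (ae_of_all _ hinner)).add (integrable_const (f 0))).congr
      (ae_of_all _ fun x => sub_add_cancel (f x) (f 0))
  calc ∫ x, f x ∂ν = f 0 + ∫ x, ∫ t, k x t ∂volume ∂ν := by
        simp_rw [hinner]
        rw [integral_sub hf_int (integrable_const _)]
        simp
    _ = f 0 + ∫ t, deriv f t * signedTail ν t := by
        rw [integral_integral_swap hk]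
        simp_rw [houter]

theorem abs_integral_sub_integral_le {γ : Measure ℝ} [IsProbabilityMeasure γ]
    (hν : Integrable id ν) (hγ : Integrable id γ) {f : ℝ → ℝ} {C : ℝ}
    (hf : Differentiable ℝ f) (hf' : ∀ t, |deriv f t| ≤ C) :
    |∫ x, f x ∂ν - ∫ x, f x ∂γ| ≤ C * ∫ t, |cdf ν t - cdf γ t| := by
  have hW := (integrable_signedTail_iff.2 hν).sub (integrable_signedTail_iff.2 hγ)
  have hsub : ∀ t, signedTail ν t - signedTail γ t = -(cdf ν t - cdf γ t) := fun t => by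
    simp only [signedTail]; ring
  have hmul : ∀ {μ' : Measure ℝ} [IsProbabilityMeasure μ'], Integrable id μ' →
      Integrable (fun t => deriv f t * signedTail μ' t) := fun h =>
    (integrable_signedTail_iff.2 h).bdd_mul (measurable_deriv f).aestronglyMeasurable
      (ae_of_all _ hf')
  calc |∫ x, f x ∂ν - ∫ x, f x ∂γ|
      = ‖∫ t, deriv f t * (signedTail ν t - signedTail γ t)‖ := by
        rw [integral_eq_add_integral_deriv_mul_signedTail hν hf hf',
          integral_eq_add_integral_deriv_mul_signedTail hγ hf hf', add_sub_add_left_eq_sub,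
          ← integral_sub (hmul hν) (hmul hγ), Real.norm_eq_abs]
        simp_rw [mul_sub]
    _ ≤ ∫ t, C * |signedTail ν t - signedTail γ t| :=
        norm_integral_le_of_norm_le (hW.abs.const_mul C) (ae_of_all _ fun t => by
          rw [norm_mul, Real.norm_eq_abs, Real.norm_eq_abs]
          exact mul_le_mul_of_nonneg_right (hf' t) (abs_nonneg _))
    _ = C * ∫ t, |cdf ν t - cdf γ t| := by
        simp_rw [integral_const_mul, hsub, abs_neg]

theorem integrable_id_of_abs_cdf_sub_le {γ : Measure ℝ} [IsProbabilityMeasure γ]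
    (hγ : Integrable id γ) {g : ℝ → ℝ} (hg : Integrable g) (h : ∀ t, |cdf ν t - cdf γ t| ≤ g t) :
    Integrable id ν := by
  have hdiff : Integrable fun t => cdf ν t - cdf γ t :=
    hg.mono' ((cdf ν).mono.measurable.sub (cdf γ).mono.measurable).aestronglyMeasurable
      (ae_of_all _ h)
  refine integrable_signedTail_iff.1 (((integrable_signedTail_iff.2 hγ).sub hdiff).congr
    (ae_of_all _ fun t => ?_))
  simp only [signedTail, Pi.sub_apply]; ring

theorem abs_integral_sub_integral_le_of_abs_cdf_sub_le {γ : Measure ℝ} [IsProbabilityMeasure γ]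
    (hγ : Integrable id γ) {g : ℝ → ℝ} (hg : Integrable g) (h : ∀ t, |cdf ν t - cdf γ t| ≤ g t)
    {f : ℝ → ℝ} {C : ℝ} (hf : Differentiable ℝ f) (hf' : ∀ t, |deriv f t| ≤ C) :
    |∫ x, f x ∂ν - ∫ x, f x ∂γ| ≤ C * ∫ t, g t :=
  (abs_integral_sub_integral_le (integrable_id_of_abs_cdf_sub_le hγ hg h) hγ hf hf').trans <|
    mul_le_mul_of_nonneg_left
      (integral_mono_of_nonneg (ae_of_all _ fun _ => abs_nonneg _) hg (ae_of_all _ h))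
      ((abs_nonneg _).trans (hf' 0))

end ProbabilityMeasure

lemma integral_cos_gaussianReal (m : ℝ) (v : NNReal) (a l : ℝ) :
    ∫ x, cos (a + l * x) ∂(gaussianReal m v) = exp (-(v * l ^ 2 / 2)) * cos (a + l * m) := by
  have hint : Integrable (fun x : ℝ => Complex.exp (l * x * Complex.I)) (gaussianReal m v) :=
    (integrable_const (1 : ℝ)).mono' (by fun_prop) (ae_of_all _ fun x => by
      rw [← Complex.ofReal_mul, Complex.norm_exp_ofReal_mul_I])
  calc ∫ x, cos (a + l * x) ∂(gaussianReal m v)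
      = ∫ x, RCLike.re (Complex.exp (a * Complex.I) * Complex.exp (l * x * Complex.I))
          ∂(gaussianReal m v) := by
        congr with x
        rw [RCLike.re_to_complex, ← Complex.exp_add, ← add_mul]
        exact_mod_cast (Complex.exp_ofReal_mul_I_re (a + l * x)).symm
    _ = (Complex.exp (a * Complex.I) * charFun (gaussianReal m v) l).re := by
        rw [integral_re (hint.const_mul _), integral_const_mul, charFun_apply_real,
          RCLike.re_to_complex]
    _ = exp (-(v * l ^ 2 / 2)) * cos (a + l * m) := by
        rw [charFun_gaussianReal, ← Complex.exp_add, Complex.exp_re]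
        congr 2 <;> simp [← Complex.ofReal_pow]

lemma hasDerivAt_cos_add_mul (a l t : ℝ) :
    HasDerivAt (fun x => cos (a + l * x)) (-sin (a + l * t) * l) t := by
  simpa using (((hasDerivAt_id t).const_mul l).const_add a).cos

lemma abs_deriv_cos_add_mul_le (a l t : ℝ) : |deriv (fun x => cos (a + l * x)) t| ≤ |l| := by
  rw [(hasDerivAt_cos_add_mul a l t).deriv, abs_mul, abs_neg]
  exact mul_le_of_le_one_left (abs_nonneg l) (abs_sin_le_one _)

/-- Bias of the exponentially corrected cosine statistic for a random variable close to a
standard Gaussian in the nonuniform Kolmogorov sense. -/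
theorem bias_corrected_cosine_near_gaussian
    {Ω : Type*} [MeasurableSpace Ω] (μ : Measure Ω) [IsProbabilityMeasure μ]
    (X : Ω → ℝ) (hX : Measurable X) (D : ℝ) (hD : 0 ≤ D)
    (hclose : ∀ x : ℝ,
      |(μ {ω | X ω ≤ x}).toReal - cdf (gaussianReal 0 1) x| ≤ D / (1 + x ^ 2))
    (a l : ℝ) (hl : 0 < l) :
    |Real.exp (l ^ 2 / 2) * (∫ ω, Real.cos (a + l * X ω) ∂μ) - Real.cos a|
      ≤ 2 * Real.pi * l * D * Real.exp (l ^ 2 / 2) := by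
  have : IsProbabilityMeasure (μ.map X) := Measure.isProbabilityMeasure_map hX.aemeasurable
  have hcdf : ∀ t, |cdf (μ.map X) t - cdf (gaussianReal 0 1) t| ≤ D * (1 + t ^ 2)⁻¹ := fun t => by
    rw [cdf_eq_real, measureReal_def, Measure.map_apply hX measurableSet_Iic, ← div_eq_mul_inv]
    exact hclose t
  have hbias := abs_integral_sub_integral_le_of_abs_cdf_sub_le
    ((memLp_id_gaussianReal 1).integrable le_rfl) (integrable_inv_one_add_sq.const_mul D) hcdf
    (by fun_prop) (abs_deriv_cos_add_mul_le a l)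
  rw [integral_const_mul, integral_univ_inv_one_add_sq, abs_of_pos hl,
    integral_map hX.aemeasurable (by fun_prop), integral_cos_gaussianReal] at hbias
  simp only [NNReal.coe_one, one_mul, mul_zero, add_zero] at hbias
  have hexp : exp (l ^ 2 / 2) * exp (-(l ^ 2 / 2)) = 1 := by
    rw [← exp_add, add_neg_cancel, exp_zero]
  calc |exp (l ^ 2 / 2) * (∫ ω, cos (a + l * X ω) ∂μ) - cos a|
      = exp (l ^ 2 / 2) * |∫ ω, cos (a + l * X ω) ∂μ - exp (-(l ^ 2 / 2)) * cos a| := by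
        rw [← abs_of_pos (exp_pos (l ^ 2 / 2)), ← abs_mul, abs_of_pos (exp_pos _)]
        congr 1
        linear_combination cos a * hexp
    _ ≤ exp (l ^ 2 / 2) * (l * (D * π)) := by gcongr
    _ ≤ 2 * π * l * D * exp (l ^ 2 / 2) := by
        nlinarith [mul_nonneg (mul_nonneg (mul_nonneg hl.le hD) pi_pos.le) (exp_pos (l ^ 2 / 2)).le]
end

section
/- Let d ≥ 1, let K ⊆ ℝ^d be a measurable set of finite Lebesgue measure, and let Z : K × Ω → ℝ be a jointly measurable random field on a probability space (Ω, 𝒜, P) with ∫_K E[Z(t)²] dt < ∞. Let δ > 0 and assume that Cov(Z(t), Z(t')) = 0 whenever t, t' ∈ K satisfy |t_p − t'_p| > δ for some coordinate p ∈ {1, …, d}. Then Var(∫_K Z(t) dt) ≤ (2δ)^d · ∫_K Var(Z(t)) dt. -/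
/-! By Fubini, `Var (∫ Z) = ∬ Cov (Z t, Z t') dt dt'`. The covariance vanishes off the band
`‖t - t'‖∞ ≤ δ` and is at most `(Var Z t + Var Z t') / 2` on it; by symmetry of the band this
integrates to at most `∫ Var Z t · vol (B∞(t, δ)) dt ≤ (2δ)^d ∫ Var Z t dt`. -/

open MeasureTheory ProbabilityTheory

lemma two_mul_covariance_le_variance_add_variance {Ω : Type*} [MeasurableSpace Ω]
    {μ : Measure Ω} [IsFiniteMeasure μ] {X Y : Ω → ℝ}
    (hX : MemLp X 2 μ) (hY : MemLp Y 2 μ) :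
    2 * cov[X, Y; μ] ≤ Var[X; μ] + Var[Y; μ] := by
  have := variance_nonneg (X - Y) μ
  rw [variance_sub hX hY] at this
  linarith

section Band

variable {T : Type*} [MeasurableSpace T] {ν : Measure T}

lemma integral_indicator_comp_fst_le [IsFiniteMeasure ν] {S : Set (T × T)} (hS : MeasurableSet S)
    {v : T → ℝ} (hv : Integrable v ν) (hv0 : 0 ≤ v) {c : ℝ}
    (hc : ∀ t, ν.real (Prod.mk t ⁻¹' S) ≤ c) :
    ∫ q, S.indicator (fun q => v q.1) q ∂(ν.prod ν) ≤ c * ∫ t, v t ∂ν := by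
  rw [integral_prod _ ((hv.comp_fst ν).indicator hS), ← integral_const_mul]
  refine integral_mono_of_nonneg (ae_of_all _ fun t => integral_nonneg fun t' =>
    Set.indicator_nonneg (fun q _ => hv0 q.1) _) (hv.const_mul c) (ae_of_all _ fun t => ?_)
  have hslice :
      ∫ t', S.indicator (fun q => v q.1) (t, t') ∂ν = ν.real (Prod.mk t ⁻¹' S) * v t := by
    simp_rw [← Set.indicator_comp_right (Prod.mk t) (g := fun q => v q.1)]
    exact integral_indicator_const (v t) (measurable_prodMk_left hS)
  dsimp only
  rw [hslice]
  exact mul_le_mul_of_nonneg_right (hc t) (hv0 t)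

lemma integral_indicator_comp_snd_eq [SFinite ν] {S : Set (T × T)} (hS : Prod.swap ⁻¹' S = S)
    (v : T → ℝ) :
    ∫ q, S.indicator (fun q => v q.2) q ∂(ν.prod ν)
      = ∫ q, S.indicator (fun q => v q.1) q ∂(ν.prod ν) := by
  rw [← integral_prod_swap]
  congr with q
  rw [← Set.indicator_comp_right Prod.swap, hS]
  rfl

end Band

namespace RandomField

variable {T Ω : Type*} [MeasurableSpace T] [MeasurableSpace Ω] {ν : Measure T} {μ : Measure Ω}
  {F : T → Ω → ℝ}

lemma memLp_uncurry_two [SFinite ν] [SFinite μ] (hF : Measurable (Function.uncurry F))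
    (hL2 : ∀ᵐ t ∂ν, MemLp (F t) 2 μ) (hint : Integrable (fun t => ∫ ω, F t ω ^ 2 ∂μ) ν) :
    MemLp (Function.uncurry F) 2 (ν.prod μ) := by
  refine (memLp_two_iff_integrable_sq hF.aestronglyMeasurable).2 <|
    (integrable_prod_iff (hF.pow_const 2).aestronglyMeasurable).2 ⟨?_, ?_⟩
  · filter_upwards [hL2] with t ht using ht.integrable_sq
  · refine hint.congr (ae_of_all _ fun t => integral_congr_ae (ae_of_all _ fun ω => ?_))
    simp [Function.uncurry]

lemma integrable_mul_fst_snd [IsFiniteMeasure ν] [IsFiniteMeasure μ]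
    (hF : Measurable (Function.uncurry F))
    (hL2 : ∀ᵐ t ∂ν, MemLp (F t) 2 μ) (hint : Integrable (fun t => ∫ ω, F t ω ^ 2 ∂μ) ν) :
    Integrable (fun q : (T × T) × Ω => F q.1.1 q.2 * F q.1.2 q.2) ((ν.prod ν).prod μ) := by
  have h₁ : MemLp (fun q : (T × T) × Ω => F q.1.1 q.2) 2 ((ν.prod ν).prod μ) :=
    memLp_uncurry_two (F := fun s : T × T => F s.1)
      (hF.comp (measurable_fst.fst.prodMk measurable_snd) :)
      (Measure.quasiMeasurePreserving_fst.ae hL2) (hint.comp_fst ν)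
  have h₂ : MemLp (fun q : (T × T) × Ω => F q.1.2 q.2) 2 ((ν.prod ν).prod μ) :=
    memLp_uncurry_two (F := fun s : T × T => F s.2)
      (hF.comp (measurable_fst.snd.prodMk measurable_snd) :)
      (Measure.quasiMeasurePreserving_snd.ae hL2) (hint.comp_snd ν)
  exact h₁.integrable_mul h₂

lemma integral_sq_integral_eq_integral_mul [IsFiniteMeasure ν] [IsFiniteMeasure μ]
    (hF : Measurable (Function.uncurry F))
    (hL2 : ∀ᵐ t ∂ν, MemLp (F t) 2 μ) (hint : Integrable (fun t => ∫ ω, F t ω ^ 2 ∂μ) ν) :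
    ∫ ω, (∫ t, F t ω ∂ν) ^ 2 ∂μ = ∫ q, ∫ ω, F q.1 ω * F q.2 ω ∂μ ∂(ν.prod ν) := by
  simp_rw [sq, ← integral_prod_mul]
  exact integral_integral_swap (integrable_mul_fst_snd hF hL2 hint).swap

lemma memLp_integral [IsFiniteMeasure ν] [IsFiniteMeasure μ]
    (hF : Measurable (Function.uncurry F))
    (hL2 : ∀ᵐ t ∂ν, MemLp (F t) 2 μ) (hint : Integrable (fun t => ∫ ω, F t ω ^ 2 ∂μ) ν) :
    MemLp (fun ω => ∫ t, F t ω ∂ν) 2 μ := by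
  refine (memLp_two_iff_integrable_sq
    (hF.comp measurable_swap).stronglyMeasurable.integral_prod_right'.aestronglyMeasurable).2 ?_
  have hsq (ω : Ω) : ∫ q, F q.1 ω * F q.2 ω ∂(ν.prod ν) = (∫ t, F t ω ∂ν) ^ 2 := by
    rw [sq, integral_prod_mul (fun t => F t ω) (fun t => F t ω)]
  exact (integrable_mul_fst_snd hF hL2 hint).swap.integral_prod_left.congr (ae_of_all _ hsq)

lemma covariance_ae_eq_sub [IsProbabilityMeasure μ] (hL2 : ∀ᵐ t ∂ν, MemLp (F t) 2 μ) :
    ∀ᵐ q ∂(ν.prod ν), cov[F q.1, F q.2; μ]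
      = ∫ ω, F q.1 ω * F q.2 ω ∂μ - (∫ ω, F q.1 ω ∂μ) * ∫ ω, F q.2 ω ∂μ := by
  filter_upwards [Measure.quasiMeasurePreserving_fst.ae hL2,
    Measure.quasiMeasurePreserving_snd.ae hL2] with q h₁ h₂ using covariance_eq_sub h₁ h₂

lemma integrable_covariance [IsFiniteMeasure ν] [IsProbabilityMeasure μ]
    (hF : Measurable (Function.uncurry F))
    (hL2 : ∀ᵐ t ∂ν, MemLp (F t) 2 μ) (hint : Integrable (fun t => ∫ ω, F t ω ^ 2 ∂μ) ν) :
    Integrable (fun q => cov[F q.1, F q.2; μ]) (ν.prod ν) := by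
  have hm : Integrable (fun t => ∫ ω, F t ω ∂μ) ν :=
    ((memLp_uncurry_two hF hL2 hint).integrable one_le_two).integral_prod_left
  exact ((integrable_mul_fst_snd hF hL2 hint).integral_prod_left.sub (hm.mul_prod hm)).congr
    (Filter.EventuallyEq.symm (covariance_ae_eq_sub hL2))

theorem variance_integral_eq_integral_covariance [IsFiniteMeasure ν] [IsProbabilityMeasure μ]
    (hF : Measurable (Function.uncurry F))
    (hL2 : ∀ᵐ t ∂ν, MemLp (F t) 2 μ) (hint : Integrable (fun t => ∫ ω, F t ω ^ 2 ∂μ) ν) :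
    Var[fun ω => ∫ t, F t ω ∂ν; μ] = ∫ q, cov[F q.1, F q.2; μ] ∂(ν.prod ν) := by
  have hFint := (memLp_uncurry_two hF hL2 hint).integrable one_le_two
  have hm : Integrable (fun t => ∫ ω, F t ω ∂μ) ν := hFint.integral_prod_left
  have hmean : ∫ ω, ∫ t, F t ω ∂ν ∂μ = ∫ t, ∫ ω, F t ω ∂μ ∂ν :=
    integral_integral_swap hFint.swap
  rw [variance_eq_sub (memLp_integral hF hL2 hint), integral_congr_ae (covariance_ae_eq_sub hL2),
    integral_sub (integrable_mul_fst_snd hF hL2 hint).integral_prod_left (hm.mul_prod hm)]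
  dsimp only [Pi.pow_apply]
  rw [integral_prod_mul (fun t => ∫ ω, F t ω ∂μ) (fun t => ∫ ω, F t ω ∂μ),
    ← integral_sq_integral_eq_integral_mul hF hL2 hint, hmean, sq]

theorem integrable_variance [IsProbabilityMeasure μ] (hF : Measurable (Function.uncurry F))
    (hL2 : ∀ᵐ t ∂ν, MemLp (F t) 2 μ) (hint : Integrable (fun t => ∫ ω, F t ω ^ 2 ∂μ) ν) :
    Integrable (fun t => Var[F t; μ]) ν := by
  have hm : StronglyMeasurable (fun t => ∫ ω, F t ω ∂μ) :=
    hF.stronglyMeasurable.integral_prod_right'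
  have hmeas : AEStronglyMeasurable (fun t => Var[F t; μ]) ν := by
    refine (hint.aestronglyMeasurable.sub (hm.aestronglyMeasurable.pow 2)).congr ?_
    filter_upwards [hL2] with t ht
    exact (variance_eq_sub ht).symm
  refine hint.mono' hmeas (ae_of_all _ fun t => ?_)
  rw [Real.norm_of_nonneg (variance_nonneg _ _)]
  exact variance_le_expectation_sq (hF.comp measurable_prodMk_left).aestronglyMeasurable

theorem variance_integral_le_of_covariance_eq_zero [PseudoMetricSpace T]
    [OpensMeasurableSpace T] [SecondCountableTopology T] [IsFiniteMeasure ν]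
    [IsProbabilityMeasure μ] (hF : Measurable (Function.uncurry F))
    (hL2 : ∀ᵐ t ∂ν, MemLp (F t) 2 μ) (hint : Integrable (fun t => ∫ ω, F t ω ^ 2 ∂μ) ν)
    {δ c : ℝ} (hball : ∀ t, ν.real (Metric.closedBall t δ) ≤ c)
    (hcov : ∀ᵐ q ∂(ν.prod ν), δ < dist q.1 q.2 → cov[F q.1, F q.2; μ] = 0) :
    Var[fun ω => ∫ t, F t ω ∂ν; μ] ≤ c * ∫ t, Var[F t; μ] ∂ν := by
  set v : T → ℝ := fun t => Var[F t; μ]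
  set S : Set (T × T) := {q | dist q.1 q.2 ≤ δ}
  have hS : MeasurableSet S := measurableSet_le measurable_dist measurable_const
  have hv : Integrable v ν := integrable_variance hF hL2 hint
  have hv₁ : Integrable (S.indicator fun q => v q.1) (ν.prod ν) := (hv.comp_fst ν).indicator hS
  have hv₂ : Integrable (S.indicator fun q => v q.2) (ν.prod ν) := (hv.comp_snd ν).indicator hS
  have hbound : ∀ᵐ q ∂(ν.prod ν), cov[F q.1, F q.2; μ]
      ≤ (S.indicator (fun q => v q.1) q + S.indicator (fun q => v q.2) q) / 2 := by
    filter_upwards [hcov, Measure.quasiMeasurePreserving_fst.ae hL2,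
      Measure.quasiMeasurePreserving_snd.ae hL2] with q hq h₁ h₂
    by_cases hqS : q ∈ S
    · rw [Set.indicator_of_mem hqS, Set.indicator_of_mem hqS]
      linarith [two_mul_covariance_le_variance_add_variance h₁ h₂]
    · rw [Set.indicator_of_notMem hqS, Set.indicator_of_notMem hqS, hq (not_le.1 hqS)]
      norm_num
  calc Var[fun ω => ∫ t, F t ω ∂ν; μ] = ∫ q, cov[F q.1, F q.2; μ] ∂(ν.prod ν) :=
        variance_integral_eq_integral_covariance hF hL2 hint
    _ ≤ ∫ q, (S.indicator (fun q => v q.1) q + S.indicator (fun q => v q.2) q) / 2 ∂(ν.prod ν) :=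
        integral_mono_ae (integrable_covariance hF hL2 hint)
          ((hv₁.add hv₂).div_const 2) hbound
    _ = ∫ q, S.indicator (fun q => v q.1) q ∂(ν.prod ν) := by
        rw [integral_div, integral_add hv₁ hv₂,
          integral_indicator_comp_snd_eq (by ext; simp [S, dist_comm])]
        ring
    _ ≤ c * ∫ t, v t ∂ν :=
        integral_indicator_comp_fst_le hS hv (fun t => variance_nonneg _ _) fun t => by
          simpa [S, Metric.closedBall, dist_comm] using hball t

end RandomField

theorem variance_integral_short_range_field_general
    (d : ℕ)
    {Ω : Type*} [MeasurableSpace Ω] (μ : Measure Ω) [IsProbabilityMeasure μ]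
    (K : Set (Fin d → ℝ)) (hK : MeasurableSet K) (hKfin : volume K < ⊤)
    (Z : (Fin d → ℝ) → Ω → ℝ)
    (hZmeas : Measurable (fun p : (Fin d → ℝ) × Ω => Z p.1 p.2))
    (hZL2 : ∀ t ∈ K, MemLp (Z t) 2 μ)
    (hZint : IntegrableOn (fun t => ∫ ω, (Z t ω) ^ 2 ∂μ) K (volume : Measure (Fin d → ℝ)))
    (δ : ℝ) (hδ : 0 < δ)
    (hshort : ∀ t ∈ K, ∀ t' ∈ K, (∃ p : Fin d, δ < |t p - t' p|) →
      (∫ ω, Z t ω * Z t' ω ∂μ) - (∫ ω, Z t ω ∂μ) * (∫ ω, Z t' ω ∂μ) = 0) :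
    variance (fun ω => ∫ t in K, Z t ω) μ
      ≤ (2 * δ) ^ d * ∫ t in K, variance (Z t) μ := by
  have : IsFiniteMeasure (volume.restrict K) := isFiniteMeasure_restrict.2 hKfin.ne
  have hKK : ∀ᵐ q ∂((volume.restrict K).prod (volume.restrict K)), q.1 ∈ K ∧ q.2 ∈ K :=
    (Measure.quasiMeasurePreserving_fst.ae (ae_restrict_mem hK)).and
      (Measure.quasiMeasurePreserving_snd.ae (ae_restrict_mem hK))
  refine RandomField.variance_integral_le_of_covariance_eq_zero hZmeas
    ((ae_restrict_mem hK).mono hZL2) hZint (δ := δ) (fun t => ?_) ?_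
  -- `Fin d → ℝ` carries the sup metric, so its closed balls are cubes of side `2δ`.
  · refine ENNReal.toReal_le_of_le_ofReal (by positivity) ?_
    calc volume.restrict K (Metric.closedBall t δ) ≤ volume (Metric.closedBall t δ) :=
          Measure.restrict_apply_le _ _
      _ = ENNReal.ofReal ((2 * δ) ^ d) := by simp [Real.volume_pi_closedBall t hδ.le]
  · filter_upwards [hKK] with q ⟨h₁, h₂⟩ hfar
    rw [covariance_eq_sub (hZL2 _ h₁) (hZL2 _ h₂)]
    refine hshort _ h₁ _ h₂ ?_
    by_contra! hnear
    exact hfar.not_ge <| (dist_pi_le_iff hδ.le).2 fun p => by rw [Real.dist_eq]; exact hnear p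

/-- Variance of the integral of a short-range correlated random field. -/
theorem variance_integral_short_range_field
    (d : ℕ) (hd : 1 ≤ d)
    {Ω : Type*} [MeasurableSpace Ω] (μ : Measure Ω) [IsProbabilityMeasure μ]
    (K : Set (Fin d → ℝ)) (hK : MeasurableSet K) (hKfin : volume K < ⊤)
    (Z : (Fin d → ℝ) → Ω → ℝ)
    (hZmeas : Measurable (fun p : (Fin d → ℝ) × Ω => Z p.1 p.2))
    (hZL2 : ∀ t ∈ K, MemLp (Z t) 2 μ)
    (hZint : IntegrableOn (fun t => ∫ ω, (Z t ω) ^ 2 ∂μ) K (volume : Measure (Fin d → ℝ)))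
    (δ : ℝ) (hδ : 0 < δ)
    (hshort : ∀ t ∈ K, ∀ t' ∈ K, (∃ p : Fin d, δ < |t p - t' p|) →
      (∫ ω, Z t ω * Z t' ω ∂μ) - (∫ ω, Z t ω ∂μ) * (∫ ω, Z t' ω ∂μ) = 0) :
    variance (fun ω => ∫ t in K, Z t ω) μ
      ≤ (2 * δ) ^ d * ∫ t in K, variance (Z t) μ :=
  variance_integral_short_range_field_general d μ K hK hKfin Z hZmeas hZL2 hZint δ hδ hshort
end

section
/- Let d ≥ 1, let K ⊆ ℝ^d be a measurable set of finite Lebesgue measure, and let Z : K × Ω → ℝ be a jointly measurable random field on a probability space (Ω, 𝒜, P) with ∫_K E[Z(t)²] dt < ∞. Let δ > 0 and assume that Cov(Z(t), Z(t')) = 0 whenever t, t' ∈ K satisfy |t_p − t'_p| > δ for some coordinate p ∈ {1, …, d}. Then E[ |∫_K (Z(t) − E[Z(t)]) dt| ] ≤ (2δ)^{d/2} · ( ∫_K Var(Z(t)) dt )^{1/2}. -/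
/-!
Centre the field, `W t = Z t - 𝔼[Z t]`, and let `Y = ∫_K W t dt`. By Cauchy–Schwarz
`𝔼|Y| ≤ √𝔼[Y²]`, and Fubini on `K × K × Ω` gives `𝔼[Y²] = ∬_{K×K} Cov(Z t, Z t') dt dt'`.
The covariance vanishes unless `t'` lies in the closed `δ`-ball around `t` for the sup metric
of `Fin d → ℝ`, a cube of volume `(2δ)^d`, and there `|Cov(Z t, Z t')| ≤ (Var Z t + Var Z t')/2`.
By the symmetry `t ↔ t'` the double integral is therefore at most `(2δ)^d ∫_K Var Z t dt`.
-/

open MeasureTheory ProbabilityTheory Metric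

section Moments

variable {Ω : Type*} [MeasurableSpace Ω] {μ : Measure Ω}

lemma integral_abs_le_sqrt_integral_sq [IsProbabilityMeasure μ] {Y : Ω → ℝ}
    (hY : MemLp Y 2 μ) : ∫ ω, |Y ω| ∂μ ≤ √(∫ ω, Y ω ^ 2 ∂μ) := by
  have hvar := variance_nonneg (fun ω => ‖Y ω‖) μ
  rw [variance_eq_sub hY.norm] at hvar
  simp only [Pi.pow_apply, Real.norm_eq_abs, sq_abs] at hvar
  exact Real.le_sqrt_of_sq_le (by linarith)

lemma integral_abs_mul_le {X Y : Ω → ℝ} (hX : MemLp X 2 μ) (hY : MemLp Y 2 μ) :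
    ∫ ω, |X ω * Y ω| ∂μ ≤ (∫ ω, X ω ^ 2 ∂μ + ∫ ω, Y ω ^ 2 ∂μ) / 2 := by
  have hamgm (a b : ℝ) : |a * b| ≤ (a ^ 2 + b ^ 2) / 2 := by
    rw [abs_mul]
    nlinarith [sq_nonneg (|a| - |b|), sq_abs a, sq_abs b]
  rw [← integral_add hX.integrable_sq hY.integrable_sq, ← integral_div]
  exact integral_mono (hX.integrable_mul hY).abs
    ((hX.integrable_sq.add hY.integrable_sq).div_const 2) fun ω => hamgm (X ω) (Y ω)

end Moments

section Field

variable {T Ω : Type*} [MeasurableSpace T] [MeasurableSpace Ω] {ν : Measure T} {μ : Measure Ω}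
  [IsFiniteMeasure ν] [SFinite μ] {X : T → Ω → ℝ}

lemma integrable_field_mul_field (hX : Measurable (Function.uncurry X))
    (hL2 : ∀ᵐ t ∂ν, MemLp (X t) 2 μ) (hsq : Integrable (fun t => ∫ ω, X t ω ^ 2 ∂μ) ν) :
    Integrable (fun q : (T × T) × Ω => X q.1.1 q.2 * X q.1.2 q.2) ((ν.prod ν).prod μ) := by
  have hmeas : Measurable (fun q : (T × T) × Ω => X q.1.1 q.2 * X q.1.2 q.2) :=
    (hX.comp (measurable_fst.fst.prodMk measurable_snd)).mul
      (hX.comp (measurable_fst.snd.prodMk measurable_snd))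
  have hL2' := (Measure.quasiMeasurePreserving_fst.ae hL2).and
    (Measure.quasiMeasurePreserving_snd.ae hL2 : ∀ᵐ z ∂(ν.prod ν), MemLp (X z.2) 2 μ)
  rw [integrable_prod_iff hmeas.aestronglyMeasurable]
  refine ⟨hL2'.mono fun z hz => hz.1.integrable_mul hz.2, ?_⟩
  refine Integrable.mono' (((hsq.comp_fst ν).add (hsq.comp_snd ν)).div_const 2)
    hmeas.norm.stronglyMeasurable.integral_prod_right'.aestronglyMeasurable ?_
  filter_upwards [hL2'] with z hz
  rw [Real.norm_eq_abs, abs_of_nonneg (integral_nonneg fun ω => norm_nonneg _)]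
  exact integral_abs_mul_le hz.1 hz.2

lemma memLp_two_integral_field (hX : Measurable (Function.uncurry X))
    (hL2 : ∀ᵐ t ∂ν, MemLp (X t) 2 μ) (hsq : Integrable (fun t => ∫ ω, X t ω ^ 2 ∂μ) ν) :
    MemLp (fun ω => ∫ t, X t ω ∂ν) 2 μ := by
  refine (memLp_two_iff_integrable_sq
    (hX.comp measurable_swap).stronglyMeasurable.integral_prod_right'.aestronglyMeasurable).2 ?_
  simp_rw [sq, ← integral_prod_mul]
  exact (integrable_field_mul_field hX hL2 hsq).swap.integral_prod_left

lemma integral_sq_integral_field (hX : Measurable (Function.uncurry X))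
    (hL2 : ∀ᵐ t ∂ν, MemLp (X t) 2 μ) (hsq : Integrable (fun t => ∫ ω, X t ω ^ 2 ∂μ) ν) :
    ∫ ω, (∫ t, X t ω ∂ν) ^ 2 ∂μ = ∫ z, ∫ ω, X z.1 ω * X z.2 ω ∂μ ∂(ν.prod ν) := by
  simp_rw [sq, ← integral_prod_mul]
  exact (integral_integral_swap (integrable_field_mul_field hX hL2 hsq)).symm

end Field

section ShortRange

variable {T Ω : Type*} [PseudoMetricSpace T] [MeasurableSpace T] [SecondCountableTopology T]
  [BorelSpace T] [MeasurableSpace Ω] {ν : Measure T} {μ : Measure Ω} [IsFiniteMeasure ν]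
  [SFinite μ] {X : T → Ω → ℝ} {δ V : ℝ}

lemma integral_indicator_dist_le_comp_fst_le {s : T → ℝ} (hs : Integrable s ν) (hs₀ : ∀ t, 0 ≤ s t)
    (hball : ∀ t, ν.real (closedBall t δ) ≤ V) :
    ∫ z, {z : T × T | dist z.1 z.2 ≤ δ}.indicator (fun z => s z.1) z ∂(ν.prod ν)
      ≤ V * ∫ t, s t ∂ν := by
  have hS : MeasurableSet {z : T × T | dist z.1 z.2 ≤ δ} :=
    measurableSet_le measurable_dist measurable_const
  have hsection (t : T) : ∫ t', {z : T × T | dist z.1 z.2 ≤ δ}.indicator (fun z => s z.1) (t, t') ∂ν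
      = ν.real (closedBall t δ) * s t := by
    have : (fun t' => {z : T × T | dist z.1 z.2 ≤ δ}.indicator (fun z => s z.1) (t, t'))
        = (closedBall t δ).indicator (fun _ => s t) := by
      ext t'
      simp [Set.indicator, mem_closedBall, dist_comm]
    rw [this, integral_indicator_const _ measurableSet_closedBall, smul_eq_mul]
  rw [integral_prod _ ((hs.comp_fst ν).indicator hS), ← integral_const_mul]
  simp_rw [hsection]
  exact integral_mono_of_nonneg (ae_of_all _ fun t => mul_nonneg measureReal_nonneg (hs₀ t))
    (hs.const_mul V) (ae_of_all _ fun t => mul_le_mul_of_nonneg_right (hball t) (hs₀ t))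

lemma integral_integral_mul_le_of_short_range (hX : Measurable (Function.uncurry X))
    (hL2 : ∀ᵐ t ∂ν, MemLp (X t) 2 μ) (hsq : Integrable (fun t => ∫ ω, X t ω ^ 2 ∂μ) ν)
    (hball : ∀ t, ν.real (closedBall t δ) ≤ V)
    (hshort : ∀ᵐ z ∂(ν.prod ν), δ < dist z.1 z.2 → ∫ ω, X z.1 ω * X z.2 ω ∂μ = 0) :
    ∫ z, ∫ ω, X z.1 ω * X z.2 ω ∂μ ∂(ν.prod ν) ≤ V * ∫ t, ∫ ω, X t ω ^ 2 ∂μ ∂ν := by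
  set s : T → ℝ := fun t => ∫ ω, X t ω ^ 2 ∂μ
  set S := {z : T × T | dist z.1 z.2 ≤ δ}
  have hS : MeasurableSet S := measurableSet_le measurable_dist measurable_const
  have hL2' := (Measure.quasiMeasurePreserving_fst.ae hL2).and
    (Measure.quasiMeasurePreserving_snd.ae hL2 : ∀ᵐ z ∂(ν.prod ν), MemLp (X z.2) 2 μ)
  have hbound : ∀ᵐ z ∂(ν.prod ν), ∫ ω, X z.1 ω * X z.2 ω ∂μ
      ≤ S.indicator (fun z => s z.1) z / 2 + S.indicator (fun z => s z.2) z / 2 := by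
    filter_upwards [hL2', hshort] with z hz hzshort
    by_cases hzS : z ∈ S
    · simp only [Set.indicator_of_mem hzS]
      calc ∫ ω, X z.1 ω * X z.2 ω ∂μ ≤ ∫ ω, |X z.1 ω * X z.2 ω| ∂μ :=
            (le_abs_self _).trans abs_integral_le_integral_abs
        _ ≤ (s z.1 + s z.2) / 2 := integral_abs_mul_le hz.1 hz.2
        _ = s z.1 / 2 + s z.2 / 2 := add_div _ _ _
    · simp [Set.indicator_of_notMem hzS, hzshort (not_le.1 hzS)]
  have hswap : ∫ z, S.indicator (fun z => s z.2) z ∂(ν.prod ν)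
      = ∫ z, S.indicator (fun z => s z.1) z ∂(ν.prod ν) := by
    rw [← integral_prod_swap]
    congr 1
    ext z
    simp [S, Set.indicator, dist_comm]
  have hfst : Integrable (S.indicator fun z => s z.1) (ν.prod ν) := (hsq.comp_fst ν).indicator hS
  have hsnd : Integrable (S.indicator fun z => s z.2) (ν.prod ν) := (hsq.comp_snd ν).indicator hS
  calc ∫ z, ∫ ω, X z.1 ω * X z.2 ω ∂μ ∂(ν.prod ν)
      ≤ ∫ z, (S.indicator (fun z => s z.1) z / 2 + S.indicator (fun z => s z.2) z / 2)
          ∂(ν.prod ν) :=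
        integral_mono_ae (integrable_field_mul_field hX hL2 hsq).integral_prod_left
          ((hfst.div_const 2).add (hsnd.div_const 2)) hbound
    _ = ∫ z, S.indicator (fun z => s z.1) z ∂(ν.prod ν) := by
        rw [integral_add (hfst.div_const 2) (hsnd.div_const 2), integral_div, integral_div, hswap]
        ring
    _ ≤ V * ∫ t, s t ∂ν :=
        integral_indicator_dist_le_comp_fst_le hsq
          (fun t => integral_nonneg fun ω => sq_nonneg _) hball

theorem integral_abs_integral_le_of_short_range [IsProbabilityMeasure μ]
    (hX : Measurable (Function.uncurry X))
    (hL2 : ∀ᵐ t ∂ν, MemLp (X t) 2 μ) (hsq : Integrable (fun t => ∫ ω, X t ω ^ 2 ∂μ) ν)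
    (hball : ∀ t, ν.real (closedBall t δ) ≤ V)
    (hshort : ∀ᵐ z ∂(ν.prod ν), δ < dist z.1 z.2 → ∫ ω, X z.1 ω * X z.2 ω ∂μ = 0) :
    ∫ ω, |∫ t, X t ω ∂ν| ∂μ ≤ √(V * ∫ t, ∫ ω, X t ω ^ 2 ∂μ ∂ν) :=
  (integral_abs_le_sqrt_integral_sq (memLp_two_integral_field hX hL2 hsq)).trans <|
    Real.sqrt_le_sqrt <| (integral_sq_integral_field hX hL2 hsq).trans_le <|
      integral_integral_mul_le_of_short_range hX hL2 hsq hball hshort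

end ShortRange

section Cubes

variable {ι : Type*} [Fintype ι]

lemma exists_lt_abs_sub_of_lt_dist {t t' : ι → ℝ} {r : ℝ} (hr : 0 ≤ r) (h : r < dist t t') :
    ∃ p, r < |t p - t' p| := by
  by_contra! hnear
  exact h.not_ge ((dist_pi_le_iff hr).2 fun p => (Real.dist_eq _ _).trans_le (hnear p))

lemma measureReal_restrict_closedBall_le (K : Set (ι → ℝ)) (t : ι → ℝ) {r : ℝ} (hr : 0 ≤ r) :
    (volume.restrict K).real (closedBall t r) ≤ (2 * r) ^ Fintype.card ι := by
  calc (volume.restrict K).real (closedBall t r) ≤ volume.real (closedBall t r) := by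
        rw [measureReal_restrict_apply measurableSet_closedBall]
        exact measureReal_mono Set.inter_subset_left measure_closedBall_lt_top.ne
    _ = (2 * r) ^ Fintype.card ι := by
        rw [measureReal_def, Real.volume_pi_closedBall t hr, ENNReal.toReal_ofReal (by positivity)]

end Cubes

theorem mean_abs_deviation_integral_short_range_field_general
    (d : ℕ)
    {Ω : Type*} [MeasurableSpace Ω] (μ : Measure Ω) [IsProbabilityMeasure μ]
    (K : Set (Fin d → ℝ)) (hK : MeasurableSet K) (hKfin : volume K < ⊤)
    (Z : (Fin d → ℝ) → Ω → ℝ)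
    (hZmeas : Measurable (fun p : (Fin d → ℝ) × Ω => Z p.1 p.2))
    (hZL2 : ∀ t ∈ K, MemLp (Z t) 2 μ)
    (hZint : IntegrableOn (fun t => ∫ ω, (Z t ω) ^ 2 ∂μ) K (volume : Measure (Fin d → ℝ)))
    (δ : ℝ) (hδ : 0 < δ)
    (hshort : ∀ t ∈ K, ∀ t' ∈ K, (∃ p : Fin d, δ < |t p - t' p|) →
      (∫ ω, Z t ω * Z t' ω ∂μ) - (∫ ω, Z t ω ∂μ) * (∫ ω, Z t' ω ∂μ) = 0) :
    (∫ ω, |∫ t in K, (Z t ω - ∫ ω', Z t ω' ∂μ)| ∂μ)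
      ≤ (2 * δ) ^ ((d : ℝ) / 2) * Real.sqrt (∫ t in K, variance (Z t) μ) := by
  have : IsFiniteMeasure (volume.restrict K) := isFiniteMeasure_restrict.2 hKfin.ne
  set W : (Fin d → ℝ) → Ω → ℝ := fun t ω => Z t ω - ∫ ω', Z t ω' ∂μ
  have hW : Measurable (Function.uncurry W) :=
    hZmeas.sub (hZmeas.stronglyMeasurable.integral_prod_right'.measurable.comp measurable_fst)
  have hK_ae : ∀ᵐ t ∂volume.restrict K, t ∈ K := ae_restrict_mem hK
  have hW_sq (t : Fin d → ℝ) (ht : t ∈ K) : ∫ ω, W t ω ^ 2 ∂μ = variance (Z t) μ :=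
    (variance_eq_integral (hZL2 t ht).aemeasurable).symm
  have hWL2 : ∀ᵐ t ∂volume.restrict K, MemLp (W t) 2 μ :=
    hK_ae.mono fun t ht => (hZL2 t ht).sub (memLp_const _)
  have hW_sq_int : Integrable (fun t => ∫ ω, W t ω ^ 2 ∂μ) (volume.restrict K) := by
    refine hZint.mono'
      (hW.pow_const 2).stronglyMeasurable.integral_prod_right'.aestronglyMeasurable ?_
    filter_upwards [hK_ae] with t ht
    rw [hW_sq t ht, Real.norm_of_nonneg (variance_nonneg _ _)]
    exact variance_le_expectation_sq (hZL2 t ht).aestronglyMeasurable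
  have hcov : ∀ᵐ z ∂(volume.restrict K).prod (volume.restrict K),
      δ < dist z.1 z.2 → ∫ ω, W z.1 ω * W z.2 ω ∂μ = 0 := by
    filter_upwards [Measure.quasiMeasurePreserving_fst.ae hK_ae,
      Measure.quasiMeasurePreserving_snd.ae hK_ae] with z h₁ h₂ hfar
    rw [← hshort z.1 h₁ z.2 h₂ (exists_lt_abs_sub_of_lt_dist hδ.le hfar)]
    -- the left-hand side is `cov[Z z.1, Z z.2; μ]` unfolded
    exact covariance_eq_sub (hZL2 z.1 h₁) (hZL2 z.2 h₂)
  calc ∫ ω, |∫ t in K, W t ω| ∂μ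
      ≤ √((2 * δ) ^ d * ∫ t in K, ∫ ω, W t ω ^ 2 ∂μ) :=
        integral_abs_integral_le_of_short_range hW hWL2 hW_sq_int
          (fun t => by simpa using measureReal_restrict_closedBall_le K t hδ.le) hcov
    _ = (2 * δ) ^ ((d : ℝ) / 2) * √(∫ t in K, variance (Z t) μ) := by
        rw [setIntegral_congr_fun hK hW_sq, Real.sqrt_mul (by positivity), Real.sqrt_eq_rpow,
          ← Real.rpow_natCast, ← Real.rpow_mul (by positivity)]
        ring_nf

/-- Mean absolute deviation of the integral of a short-range correlated random field. -/
theorem mean_abs_deviation_integral_short_range_field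
    (d : ℕ) (hd : 1 ≤ d)
    {Ω : Type*} [MeasurableSpace Ω] (μ : Measure Ω) [IsProbabilityMeasure μ]
    (K : Set (Fin d → ℝ)) (hK : MeasurableSet K) (hKfin : volume K < ⊤)
    (Z : (Fin d → ℝ) → Ω → ℝ)
    (hZmeas : Measurable (fun p : (Fin d → ℝ) × Ω => Z p.1 p.2))
    (hZL2 : ∀ t ∈ K, MemLp (Z t) 2 μ)
    (hZint : IntegrableOn (fun t => ∫ ω, (Z t ω) ^ 2 ∂μ) K (volume : Measure (Fin d → ℝ)))
    (δ : ℝ) (hδ : 0 < δ)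
    (hshort : ∀ t ∈ K, ∀ t' ∈ K, (∃ p : Fin d, δ < |t p - t' p|) →
      (∫ ω, Z t ω * Z t' ω ∂μ) - (∫ ω, Z t ω ∂μ) * (∫ ω, Z t' ω ∂μ) = 0) :
    (∫ ω, |∫ t in K, (Z t ω - ∫ ω', Z t ω' ∂μ)| ∂μ)
      ≤ (2 * δ) ^ ((d : ℝ) / 2) * Real.sqrt (∫ t in K, variance (Z t) μ) :=
  mean_abs_deviation_integral_short_range_field_general d μ K hK hKfin Z hZmeas hZL2 hZint δ hδ
    hshort
end
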